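/- If the map L₁(ρ) = ∑_{j=1}^m Π_jUρU*Π_j satisfies the eigenvalue condition, then for every p with 0 < p ≤ 1 and q = 1 − p, the map L_p(ρ) = q·UρU* + p·∑_{j=1}^m Π_jUρU*Π_j satisfies the eigenvalue condition. -/

import Mathlib

/-!
For the Hilbert–Schmidt inner product `⟪x, y⟫ = tr (y xᴴ)`, `Φ ρ = U ρ Uᴴ` is an isometry and the
pinching `B σ = ∑ Πⱼ σ Πⱼ` is an orthogonal projection, and `L_p = B Φ + q (1 - B) Φ`. Pythagoras
gives `‖L_p ρ‖² = ‖Φ ρ‖² - p (2 - p) ‖(1 - B) Φ ρ‖²`, so `L_p` is a contraction, and for `p > 0`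
the inequality `‖ρ‖ ≤ ‖L_p ρ‖` forces `B Φ ρ = Φ ρ`, hence `L_p ρ = L_1 ρ`. So every eigenvector of
`L_p` with `|λ| ≥ 1` is one of `L_1`, the fixed vector of `L_1` is fixed by `L_p`, and, as a
contraction has no Jordan blocks at `1`, the generalized `1`-eigenspace of `L_p` is its eigenspace,
which embeds in the one of `L_1`.
-/

open Matrix

/-- The algebraic multiplicity of `μ` as an eigenvalue of `T`: the dimension of the
generalized eigenspace `⋃_{m ≥ 1} ker ((T - μ·id)^m)`. -/
noncomputable def algMult {H : Type*} [AddCommGroup H] [Module ℂ H]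
    (T : Module.End ℂ H) (μ : ℂ) : ℕ :=
  Module.finrank ℂ
    (⨆ m : ℕ, LinearMap.ker ((T - μ • (1 : Module.End ℂ H)) ^ m) : Submodule ℂ H)

/-- `T` satisfies the *eigenvalue condition*: `1` is an eigenvalue of `T` of algebraic
multiplicity one, and every other eigenvalue of `T` has absolute value strictly less
than `1`. -/
def EigenCond {H : Type*} [AddCommGroup H] [Module ℂ H] (T : Module.End ℂ H) : Prop :=
  (∃ v, v ≠ 0 ∧ T v = v) ∧ algMult T 1 = 1 ∧
    ∀ (lam : ℂ) (v : H), v ≠ 0 → T v = lam • v → lam ≠ 1 → ‖lam‖ < 1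

open Module End

theorem algMult_eq_finrank_maxGenEigenspace {H : Type*} [AddCommGroup H] [Module ℂ H]
    (T : Module.End ℂ H) (μ : ℂ) : algMult T μ = finrank ℂ (T.maxGenEigenspace μ) := by
  rw [algMult, ← iSup_genEigenspace_eq, iSup_congr fun k => genEigenspace_nat (f := T) (k := k)]

variable {𝕜 E : Type*} [RCLike 𝕜]

namespace Module.End

variable [NormedAddCommGroup E] [NormedSpace 𝕜 E] {T : Module.End 𝕜 E}

theorem norm_pow_apply_le_of_norm_le (hT : ∀ x, ‖T x‖ ≤ ‖x‖) (k : ℕ) (x : E) :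
    ‖(T ^ k) x‖ ≤ ‖x‖ := by
  induction k with
  | zero => simp
  | succ k ih =>
    rw [pow_succ', mul_apply]
    exact (hT _).trans ih

theorem apply_eq_self_of_norm_le_of_apply_sub_self (hT : ∀ x, ‖T x‖ ≤ ‖x‖) {v : E}
    (hw : T (T v - v) = T v - v) : T v = v := by
  set w := T v - v
  have hTv : T v = v + w := (add_sub_cancel v (T v)).symm
  have hpow (k : ℕ) : (T ^ k) v = v + k • w := by
    induction k with
    | zero => simp
    | succ k ih =>
      rw [pow_succ', mul_apply, ih, map_add, map_nsmul, hw, succ_nsmul, hTv]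
      abel
  have hbound (k : ℕ) : (k : ℝ) * ‖w‖ ≤ 2 * ‖v‖ :=
    calc (k : ℝ) * ‖w‖ = ‖(T ^ k) v - v‖ := by
          rw [hpow, add_sub_cancel_left, RCLike.norm_nsmul 𝕜, nsmul_eq_mul]
      _ ≤ ‖(T ^ k) v‖ + ‖v‖ := norm_sub_le _ _
      _ ≤ 2 * ‖v‖ := by linarith [norm_pow_apply_le_of_norm_le hT k v]
  suffices ‖w‖ = 0 from sub_eq_zero.1 (norm_eq_zero.1 this)
  by_contra hw0
  have hwpos : 0 < ‖w‖ := (norm_nonneg w).lt_of_ne' hw0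
  obtain ⟨k, hk⟩ := exists_nat_gt (2 * ‖v‖ / ‖w‖)
  rw [div_lt_iff₀ hwpos] at hk
  linarith [hbound k]

theorem maxGenEigenspace_one_eq_eigenspace_of_norm_le (hT : ∀ x, ‖T x‖ ≤ ‖x‖) :
    T.maxGenEigenspace 1 = T.eigenspace 1 := by
  refine le_antisymm (fun v hv => ?_) eigenspace_le_maxGenEigenspace
  obtain ⟨k, hk⟩ := (mem_maxGenEigenspace T 1 v).1 hv
  clear hv
  induction k generalizing v with
  | zero => simp_all
  | succ k ih =>
    rw [pow_succ, mul_apply] at hk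
    have hfix : T (T v - v) = T v - v := by simpa using mem_eigenspace_iff.1 (ih _ hk)
    exact mem_eigenspace_iff.2 (by simpa using apply_eq_self_of_norm_le_of_apply_sub_self hT hfix)

end Module.End

section Projection

open scoped InnerProductSpace

variable [NormedAddCommGroup E] [InnerProductSpace 𝕜 E] {Φ B : E →ₗ[𝕜] E} {p : ℝ}

namespace LinearMap.IsSymmetricProjection

theorem inner_apply_sub_apply (hB : B.IsSymmetricProjection) (y : E) :
    ⟪B y, y - B y⟫_𝕜 = 0 := by
  rw [inner_sub_right, hB.isSymmetric, hB.isSymmetric, ← Module.End.mul_apply,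
    hB.isIdempotentElem.eq, sub_self]

theorem norm_sq_apply_add_smul_sub (hB : B.IsSymmetricProjection) (y : E) (t : ℝ) :
    ‖B y + (t : 𝕜) • (y - B y)‖ ^ 2 = ‖B y‖ ^ 2 + t ^ 2 * ‖y - B y‖ ^ 2 := by
  rw [@norm_add_sq 𝕜, inner_smul_right, hB.inner_apply_sub_apply, mul_zero, map_zero, mul_zero,
    add_zero, norm_smul, mul_pow, RCLike.norm_ofReal, sq_abs]

theorem norm_sq_eq_norm_sq_apply_add (hB : B.IsSymmetricProjection) (y : E) :
    ‖y‖ ^ 2 = ‖B y‖ ^ 2 + ‖y - B y‖ ^ 2 := by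
  simpa using hB.norm_sq_apply_add_smul_sub y 1

end LinearMap.IsSymmetricProjection

variable (Φ B) in
noncomputable def mixProj (p : ℝ) : E →ₗ[𝕜] E :=
  ((1 - p : ℝ) : 𝕜) • Φ + (p : 𝕜) • (B ∘ₗ Φ)

theorem mixProj_apply_eq (p : ℝ) (x : E) :
    mixProj Φ B p x = B (Φ x) + ((1 - p : ℝ) : 𝕜) • (Φ x - B (Φ x)) := by
  simp only [mixProj, LinearMap.add_apply, LinearMap.smul_apply, LinearMap.comp_apply]
  push_cast
  module

theorem norm_sq_mixProj_apply (hB : B.IsSymmetricProjection) (x : E) :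
    ‖mixProj Φ B p x‖ ^ 2 = ‖Φ x‖ ^ 2 - p * (2 - p) * ‖Φ x - B (Φ x)‖ ^ 2 := by
  rw [mixProj_apply_eq, hB.norm_sq_apply_add_smul_sub, hB.norm_sq_eq_norm_sq_apply_add (Φ x)]
  ring

theorem norm_mixProj_apply_le (hB : B.IsSymmetricProjection) (hΦ : ∀ x, ‖Φ x‖ ≤ ‖x‖)
    (hp0 : 0 ≤ p) (hp1 : p ≤ 1) (x : E) : ‖mixProj Φ B p x‖ ≤ ‖x‖ := by
  refine (sq_le_sq₀ (norm_nonneg _) (norm_nonneg _)).1 ?_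
  calc ‖mixProj Φ B p x‖ ^ 2
      = ‖Φ x‖ ^ 2 - p * (2 - p) * ‖Φ x - B (Φ x)‖ ^ 2 := norm_sq_mixProj_apply hB x
    _ ≤ ‖Φ x‖ ^ 2 := sub_le_self _ (mul_nonneg (mul_nonneg hp0 (by linarith)) (sq_nonneg _))
    _ ≤ ‖x‖ ^ 2 := by gcongr; exact hΦ x

theorem mixProj_apply_eq_of_norm_le (hB : B.IsSymmetricProjection) (hΦ : ∀ x, ‖Φ x‖ ≤ ‖x‖)
    (hp : 0 < p) (hp1 : p ≤ 1) {x : E} (hx : ‖x‖ ≤ ‖mixProj Φ B p x‖) (q : ℝ) :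
    mixProj Φ B q x = mixProj Φ B p x := by
  have hsq := pow_le_pow_left₀ (norm_nonneg _) hx 2
  rw [norm_sq_mixProj_apply hB] at hsq
  have hΦx := pow_le_pow_left₀ (norm_nonneg _) (hΦ x) 2
  have hcoef : 0 < p * (2 - p) := mul_pos hp (by linarith)
  have hnorm : ‖Φ x - B (Φ x)‖ ^ 2 = 0 := by
    nlinarith [mul_nonneg hcoef.le (sq_nonneg ‖Φ x - B (Φ x)‖)]
  have hw : Φ x - B (Φ x) = 0 := by simpa using hnorm
  rw [mixProj_apply_eq, mixProj_apply_eq, hw, smul_zero, smul_zero]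

end Projection

theorem eigenCond_mixProj [NormedAddCommGroup E] [InnerProductSpace ℂ E]
    [FiniteDimensional ℂ E] {Φ B : E →ₗ[ℂ] E} (hB : B.IsSymmetricProjection)
    (hΦ : ∀ x, ‖Φ x‖ ≤ ‖x‖) (h1 : EigenCond (mixProj Φ B 1)) {p : ℝ} (hp : 0 < p)
    (hp1 : p ≤ 1) : EigenCond (mixProj Φ B p) := by
  have hT1 {x : E} (hx : ‖x‖ ≤ ‖mixProj Φ B p x‖) : mixProj Φ B 1 x = mixProj Φ B p x :=
    mixProj_apply_eq_of_norm_le hB hΦ hp hp1 hx 1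
  obtain ⟨⟨v, hv0, hv⟩, hmult, hspec⟩ := h1
  have hTv : mixProj Φ B p v = v := by
    rw [mixProj_apply_eq_of_norm_le hB hΦ one_pos le_rfl (by rw [hv]) p, hv]
  refine ⟨⟨v, hv0, hTv⟩, ?_, fun lam x hx0 hx hlam => ?_⟩
  · have hle : eigenspace (mixProj Φ B p) 1 ≤ maxGenEigenspace (mixProj Φ B 1) 1 := fun x hx => by
      have hx := mem_eigenspace_iff.1 hx
      rw [one_smul] at hx
      refine eigenspace_le_maxGenEigenspace (mem_eigenspace_iff.2 ?_)
      rw [hT1 (by rw [hx]), hx, one_smul]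
    have hpos : 1 ≤ finrank ℂ (eigenspace (mixProj Φ B p) 1) :=
      Submodule.one_le_finrank_iff.2 (Submodule.ne_bot_iff _ |>.2
        ⟨v, mem_eigenspace_iff.2 (by rw [hTv, one_smul]), hv0⟩)
    rw [algMult_eq_finrank_maxGenEigenspace] at hmult ⊢
    rw [maxGenEigenspace_one_eq_eigenspace_of_norm_le (norm_mixProj_apply_le hB hΦ hp.le hp1)]
    have := Submodule.finrank_mono hle
    omega
  · by_contra! hlt
    have hnorm : ‖x‖ ≤ ‖mixProj Φ B p x‖ := by
      rw [hx, norm_smul]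
      exact le_mul_of_one_le_left (norm_nonneg _) hlt
    exact (hspec lam x hx0 ((hT1 hnorm).trans hx) hlam).not_ge hlt

namespace Matrix

open scoped ComplexOrder InnerProductSpace

variable {ι κ : Type*} [Fintype ι] [DecidableEq ι] [Fintype κ]

noncomputable abbrev hilbertSchmidtNormedAddCommGroup : NormedAddCommGroup (Matrix ι ι ℂ) :=
  toMatrixNormedAddCommGroup 1 PosDef.one

attribute [local instance] hilbertSchmidtNormedAddCommGroup

noncomputable abbrev hilbertSchmidtInnerProductSpace : InnerProductSpace ℂ (Matrix ι ι ℂ) :=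
  toMatrixInnerProductSpace 1 PosSemidef.one

attribute [local instance] hilbertSchmidtInnerProductSpace

theorem inner_eq_trace (x y : Matrix ι ι ℂ) : ⟪x, y⟫_ℂ = (y * xᴴ).trace := by
  show (y * 1 * xᴴ).trace = _
  rw [Matrix.mul_one]

variable (U : Matrix ι ι ℂ) (P : κ → Matrix ι ι ℂ)

def conjLinearMap : Matrix ι ι ℂ →ₗ[ℂ] Matrix ι ι ℂ :=
  LinearMap.mulRight ℂ Uᴴ ∘ₗ LinearMap.mulLeft ℂ U

def pinching : Matrix ι ι ℂ →ₗ[ℂ] Matrix ι ι ℂ :=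
  ∑ j, LinearMap.mulRight ℂ (P j) ∘ₗ LinearMap.mulLeft ℂ (P j)

@[simp]
theorem conjLinearMap_apply (x : Matrix ι ι ℂ) : conjLinearMap U x = U * x * Uᴴ := rfl

@[simp]
theorem pinching_apply (x : Matrix ι ι ℂ) : pinching P x = ∑ j, P j * x * P j := by
  simp [pinching]

variable {U P}

theorem norm_conjLinearMap_apply (hU : U ∈ unitaryGroup ι ℂ) (x : Matrix ι ι ℂ) :
    ‖conjLinearMap U x‖ = ‖x‖ := by
  have hU' : Uᴴ * U = 1 := mem_unitaryGroup_iff'.1 hU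
  have hconj : U * x * Uᴴ * (U * x * Uᴴ)ᴴ = U * (x * xᴴ) * Uᴴ := by
    simp only [conjTranspose_mul, conjTranspose_conjTranspose, Matrix.mul_assoc]
    rw [← Matrix.mul_assoc Uᴴ U, hU', Matrix.one_mul]
  rw [norm_eq_sqrt_re_inner (𝕜 := ℂ), norm_eq_sqrt_re_inner (𝕜 := ℂ), inner_eq_trace,
    inner_eq_trace, conjLinearMap_apply, hconj, trace_mul_cycle, hU', Matrix.one_mul]

theorem isSymmetricProjection_pinching (hherm : ∀ j, (P j)ᴴ = P j)
    (hidem : ∀ j, P j * P j = P j) (horth : ∀ i j, i ≠ j → P i * P j = 0) :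
    (pinching P).IsSymmetricProjection where
  isIdempotentElem := by
    refine LinearMap.ext fun x => ?_
    simp only [Module.End.mul_apply, pinching_apply, Finset.mul_sum, Finset.sum_mul]
    refine Finset.sum_congr rfl fun i _ => ?_
    rw [Finset.sum_eq_single i]
    · simp only [← Matrix.mul_assoc, hidem]
      rw [Matrix.mul_assoc _ (P i), hidem]
    · intro j _ hji
      rw [show P i * (P j * x * P j) * P i = P i * P j * x * (P j * P i) by noncomm_ring,
        horth i j hji.symm, Matrix.zero_mul, Matrix.zero_mul]
    · simp
  isSymmetric x y := by
    simp only [inner_eq_trace, pinching_apply, conjTranspose_sum, conjTranspose_mul, hherm,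
      Finset.mul_sum, Finset.sum_mul, trace_sum]
    refine Finset.sum_congr rfl fun j _ => ?_
    rw [← Matrix.mul_assoc, ← Matrix.mul_assoc, trace_mul_comm]
    simp only [Matrix.mul_assoc]

end Matrix

attribute [local instance] hilbertSchmidtNormedAddCommGroup hilbertSchmidtInnerProductSpace

theorem stmt6_general {n m : ℕ}
    (U : Matrix (Fin n) (Fin n) ℂ) (hU : U ∈ Matrix.unitaryGroup (Fin n) ℂ)
    (P : Fin m → Matrix (Fin n) (Fin n) ℂ)
    (hherm : ∀ j, (P j)ᴴ = P j) (hidem : ∀ j, P j * P j = P j)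
    (horth : ∀ i j, i ≠ j → P i * P j = 0)
    (Lp : ℝ → Module.End ℂ (Matrix (Fin n) (Fin n) ℂ))
    (hLp : ∀ (p : ℝ) (ρ), Lp p ρ =
      ((1 - p : ℝ) : ℂ) • (U * ρ * Uᴴ) + (p : ℂ) • ∑ j, P j * (U * ρ * Uᴴ) * P j)
    (h1 : EigenCond (Lp 1)) :
    ∀ p : ℝ, 0 < p → p ≤ 1 → EigenCond (Lp p) := by
  obtain rfl : Lp = mixProj (conjLinearMap U) (pinching P) :=
    funext fun p => LinearMap.ext fun ρ => by simp [hLp, mixProj]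
  exact fun p hp hp1 => eigenCond_mixProj (isSymmetricProjection_pinching hherm hidem horth)
    (fun x => (norm_conjLinearMap_apply hU x).le) h1 hp hp1

/-- Let `U` be unitary and `Π₁, …, Π_m` mutually orthogonal orthogonal
projections with `∑ Πⱼ = I`.  For `0 ≤ p ≤ 1`, `q = 1 - p`, let
`L_p(ρ) = q·UρU* + p·∑ⱼ ΠⱼUρU*Πⱼ`.  If `L₁` satisfies the eigenvalue condition, then `L_p`
satisfies the eigenvalue condition for every `0 < p ≤ 1`. -/
theorem stmt6 {n m : ℕ} (hn : 1 ≤ n)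
    (U : Matrix (Fin n) (Fin n) ℂ) (hU : U ∈ Matrix.unitaryGroup (Fin n) ℂ)
    (P : Fin m → Matrix (Fin n) (Fin n) ℂ)
    (hherm : ∀ j, (P j)ᴴ = P j) (hidem : ∀ j, P j * P j = P j)
    (horth : ∀ i j, i ≠ j → P i * P j = 0)
    (hsum : ∑ j, P j = 1)
    (Lp : ℝ → Module.End ℂ (Matrix (Fin n) (Fin n) ℂ))
    (hLp : ∀ (p : ℝ) (ρ), Lp p ρ =
      ((1 - p : ℝ) : ℂ) • (U * ρ * Uᴴ) + (p : ℂ) • ∑ j, P j * (U * ρ * Uᴴ) * P j)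
    (h1 : EigenCond (Lp 1)) :
    ∀ p : ℝ, 0 < p → p ≤ 1 → EigenCond (Lp p) :=
  stmt6_general U hU P hherm hidem horth Lp hLp h1
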